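/- arXiv:2410.16265 — 2 statements merged into one kernel-verified Lean document; each statement's English description precedes it below -/
import Mathlib

section
/- On three qubits (8×8 complex matrices formed as Kronecker products of 2×2 matrices), the three-qubit excitation operators satisfy P^+_{ABC} = (1/4)(X_A X_B X_C + Y_A X_B Y_C − X_A Y_B Y_C + Y_A Y_B X_C) and P^-_{ABC} = (i/4)(X_A X_B Y_C + X_A Y_B X_C − Y_A X_B X_C + Y_A Y_B Y_C). -/
open Matrix Complex
open scoped Kronecker

noncomputable section
namespace PaperQAOA

/-- Pauli X matrix. -/
def X : Matrix (Fin 2) (Fin 2) ℂ := !![0, 1; 1, 0]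
/-- Pauli Y matrix. -/
def Y : Matrix (Fin 2) (Fin 2) ℂ := !![0, -Complex.I; Complex.I, 0]
/-- Pauli Z matrix. -/
def Z : Matrix (Fin 2) (Fin 2) ℂ := !![1, 0; 0, -1]
/-- Qubit creation operator `Q† = (X - iY)/2`. -/
def Qdag : Matrix (Fin 2) (Fin 2) ℂ := (1/2 : ℂ) • (X - Complex.I • Y)
/-- Qubit annihilation operator `Q = (X + iY)/2`. -/
def Qann : Matrix (Fin 2) (Fin 2) ℂ := (1/2 : ℂ) • (X + Complex.I • Y)

/-- Action on qubit A of a two-qubit system. -/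
def A2 (M : Matrix (Fin 2) (Fin 2) ℂ) : Matrix (Fin 2 × Fin 2) (Fin 2 × Fin 2) ℂ :=
  M ⊗ₖ (1 : Matrix (Fin 2) (Fin 2) ℂ)
/-- Action on qubit B of a two-qubit system. -/
def B2 (M : Matrix (Fin 2) (Fin 2) ℂ) : Matrix (Fin 2 × Fin 2) (Fin 2 × Fin 2) ℂ :=
  (1 : Matrix (Fin 2) (Fin 2) ℂ) ⊗ₖ M

/-- Action on qubit A of a three-qubit system. -/
def A3 (M : Matrix (Fin 2) (Fin 2) ℂ) :
    Matrix (Fin 2 × Fin 2 × Fin 2) (Fin 2 × Fin 2 × Fin 2) ℂ :=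
  M ⊗ₖ (1 : Matrix (Fin 2 × Fin 2) (Fin 2 × Fin 2) ℂ)
/-- Action on qubit B of a three-qubit system. -/
def B3 (M : Matrix (Fin 2) (Fin 2) ℂ) :
    Matrix (Fin 2 × Fin 2 × Fin 2) (Fin 2 × Fin 2 × Fin 2) ℂ :=
  (1 : Matrix (Fin 2) (Fin 2) ℂ) ⊗ₖ (M ⊗ₖ (1 : Matrix (Fin 2) (Fin 2) ℂ))
/-- Action on qubit C of a three-qubit system. -/
def C3 (M : Matrix (Fin 2) (Fin 2) ℂ) :
    Matrix (Fin 2 × Fin 2 × Fin 2) (Fin 2 × Fin 2 × Fin 2) ℂ :=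
  (1 : Matrix (Fin 2) (Fin 2) ℂ) ⊗ₖ ((1 : Matrix (Fin 2) (Fin 2) ℂ) ⊗ₖ M)

/-- Action on qubit A of a four-qubit system. -/
def A4 (M : Matrix (Fin 2) (Fin 2) ℂ) :
    Matrix (Fin 2 × Fin 2 × Fin 2 × Fin 2) (Fin 2 × Fin 2 × Fin 2 × Fin 2) ℂ :=
  M ⊗ₖ (1 : Matrix (Fin 2 × Fin 2 × Fin 2) (Fin 2 × Fin 2 × Fin 2) ℂ)
/-- Action on qubit B of a four-qubit system. -/
def B4 (M : Matrix (Fin 2) (Fin 2) ℂ) :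
    Matrix (Fin 2 × Fin 2 × Fin 2 × Fin 2) (Fin 2 × Fin 2 × Fin 2 × Fin 2) ℂ :=
  (1 : Matrix (Fin 2) (Fin 2) ℂ) ⊗ₖ (M ⊗ₖ (1 : Matrix (Fin 2 × Fin 2) (Fin 2 × Fin 2) ℂ))
/-- Action on qubit C of a four-qubit system. -/
def C4 (M : Matrix (Fin 2) (Fin 2) ℂ) :
    Matrix (Fin 2 × Fin 2 × Fin 2 × Fin 2) (Fin 2 × Fin 2 × Fin 2 × Fin 2) ℂ :=
  (1 : Matrix (Fin 2) (Fin 2) ℂ) ⊗ₖ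
    ((1 : Matrix (Fin 2) (Fin 2) ℂ) ⊗ₖ (M ⊗ₖ (1 : Matrix (Fin 2) (Fin 2) ℂ)))
/-- Action on qubit D of a four-qubit system. -/
def D4 (M : Matrix (Fin 2) (Fin 2) ℂ) :
    Matrix (Fin 2 × Fin 2 × Fin 2 × Fin 2) (Fin 2 × Fin 2 × Fin 2 × Fin 2) ℂ :=
  (1 : Matrix (Fin 2) (Fin 2) ℂ) ⊗ₖ
    ((1 : Matrix (Fin 2) (Fin 2) ℂ) ⊗ₖ ((1 : Matrix (Fin 2) (Fin 2) ℂ) ⊗ₖ M))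

/-- Two-qubit excitation operator `S⁺ = Q†ₑ Q_f + Qₑ Q†_f` for qubits given by the
embeddings `e` and `f`. -/
def Sp {m : Type} [Fintype m] (e f : Matrix (Fin 2) (Fin 2) ℂ → Matrix m m ℂ) : Matrix m m ℂ :=
  e Qdag * f Qann + e Qann * f Qdag
/-- Two-qubit excitation operator `S⁻ = Q†ₑ Q_f - Qₑ Q†_f`. -/
def Sm {m : Type} [Fintype m] (e f : Matrix (Fin 2) (Fin 2) ℂ → Matrix m m ℂ) : Matrix m m ℂ :=
  e Qdag * f Qann - e Qann * f Qdag

/-- Three-qubit excitation operator `P⁺ = Q†ₑ Q_f Q_g + Qₑ Q†_f Q†_g`. -/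
def Pp {m : Type} [Fintype m] (e f g : Matrix (Fin 2) (Fin 2) ℂ → Matrix m m ℂ) : Matrix m m ℂ :=
  e Qdag * f Qann * g Qann + e Qann * f Qdag * g Qdag
/-- Three-qubit excitation operator `P⁻ = Q†ₑ Q_f Q_g - Qₑ Q†_f Q†_g`. -/
def Pm {m : Type} [Fintype m] (e f g : Matrix (Fin 2) (Fin 2) ℂ → Matrix m m ℂ) : Matrix m m ℂ :=
  e Qdag * f Qann * g Qann - e Qann * f Qdag * g Qdag

lemma triple_mul_eq_kronecker (M N P : Matrix (Fin 2) (Fin 2) ℂ) :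
    A3 M * B3 N * C3 P = M ⊗ₖ (N ⊗ₖ P) := by
  simp [A3, B3, C3, ← mul_kronecker_mul, Matrix.one_kronecker_one]

/-- **Pauli expansion of the three-qubit excitation operators.** On three qubits,
`P⁺_{ABC} = (1/4)(X_A X_B X_C + Y_A X_B Y_C - X_A Y_B Y_C + Y_A Y_B X_C)` and
`P⁻_{ABC} = (i/4)(X_A X_B Y_C + X_A Y_B X_C - Y_A X_B X_C + Y_A Y_B Y_C)`. -/
theorem three_qubit_excitation_pauli_expansion :
    Pp A3 B3 C3 = (1/4 : ℂ) •
      (A3 X * B3 X * C3 X + A3 Y * B3 X * C3 Y - A3 X * B3 Y * C3 Y + A3 Y * B3 Y * C3 X) ∧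
    Pm A3 B3 C3 = (Complex.I/4) •
      (A3 X * B3 X * C3 Y + A3 X * B3 Y * C3 X - A3 Y * B3 X * C3 X + A3 Y * B3 Y * C3 Y) := by
  constructor <;>
  · simp only [Pp, Pm, triple_mul_eq_kronecker]
    simp only [Qdag, Qann, sub_eq_add_neg, ← neg_smul, Matrix.add_kronecker,
      Matrix.kronecker_add, Matrix.smul_kronecker, Matrix.kronecker_smul]
    match_scalars <;> simp [Complex.ext_iff] <;> ring

end PaperQAOA
end
end

section
/- For every real β, on three qubits A, B, C the product of exponentials satisfies exp(β S^-_{AB}) · exp(β S^-_{BC}) = cos⁴(β/2)·𝟙 + (1/4)sin²(β)·Z_B Z_C + (1/4)sin²(β)·Z_A Z_B + sin⁴(β/2)·Z_A Z_C + sin(β)cos²(β/2)·S^-_{BC} + sin(β)cos²(β/2)·S^-_{AB} − sin²(β/2)sin(β)·Z_A S^+_{BC} − sin²(β/2)sin(β)·S^+_{AB} Z_C + sin²(β)·S^-_{AB} S^-_{BC}, as an identity of 8×8 complex matrices. -/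
open Matrix Complex
open scoped Kronecker

noncomputable section
namespace PaperQAOA

set_option maxHeartbeats 1600000

private lemma exp_idem {n : Type*} [Fintype n] [DecidableEq n] (c : ℂ) (P : Matrix n n ℂ)
    (hP : P * P = P) :
    NormedSpace.exp (c • P) = 1 + (Complex.exp c - 1) • P := by
  letI : SeminormedRing (Matrix n n ℂ) := Matrix.linftyOpSemiNormedRing
  letI : NormedRing (Matrix n n ℂ) := Matrix.linftyOpNormedRing
  letI : NormedAlgebra ℂ (Matrix n n ℂ) := Matrix.linftyOpNormedAlgebra
  have hPn : ∀ k : ℕ, P ^ (k + 1) = P := by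
    intro k
    induction k with
    | zero => simp
    | succ k ih => rw [pow_succ, ih, hP]
  have h1 : ∀ k : ℕ, (c • P) ^ (k + 1) = (c ^ (k + 1)) • P := by
    intro k; rw [smul_pow, hPn]
  have hsum : Summable fun k : ℕ => (((Nat.factorial k : ℕ) : ℂ)⁻¹) • (c • P) ^ k :=
    NormedSpace.expSeries_summable' (𝕂 := ℂ) (c • P)
  have hcsum : Summable fun k : ℕ => (((Nat.factorial k : ℕ) : ℂ)⁻¹) * c ^ k := by
    simpa [smul_eq_mul] using NormedSpace.expSeries_summable' (𝕂 := ℂ) c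
  have hcsum' : Summable fun k : ℕ => (((Nat.factorial (k+1) : ℕ) : ℂ)⁻¹) * c ^ (k+1) :=
    (summable_nat_add_iff 1).2 hcsum
  rw [NormedSpace.exp_eq_tsum ℂ]
  beta_reduce
  rw [hsum.tsum_eq_zero_add]
  have hterm : ∀ k : ℕ, (((Nat.factorial (k+1) : ℕ) : ℂ))⁻¹ • ((c • P) ^ (k+1))
      = ((((Nat.factorial (k+1) : ℕ) : ℂ))⁻¹ * c ^ (k+1)) • P := by
    intro k; rw [h1, smul_smul]
  have hexp : Complex.exp c = 1 + ∑' k : ℕ, (((Nat.factorial (k+1) : ℕ) : ℂ)⁻¹) * c ^ (k+1) := by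
    have h0 := congrFun Complex.exp_eq_exp_ℂ c
    rw [h0, NormedSpace.exp_eq_tsum ℂ]
    beta_reduce
    simp only [smul_eq_mul]
    rw [hcsum.tsum_eq_zero_add]
    simp [smul_eq_mul]
  rw [tsum_congr hterm, hcsum'.tsum_smul_const, hexp]
  simp

private lemma exp_cube {n : Type*} [Fintype n] [DecidableEq n] (z : ℂ) (M : Matrix n n ℂ)
    (hM : M * M * M = -M) :
    NormedSpace.exp (z • M) = 1 + Complex.sin z • M + (1 - Complex.cos z) • (M * M) := by
  have h3' : M * (M * M) = -M := by rw [← mul_assoc]; exact hM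
  have h4 : (M * M) * (M * M) = -(M * M) := by
    calc (M*M) * (M*M) = (M*M*M)*M := (mul_assoc (M*M) M M).symm
    _ = -(M*M) := by rw [hM, neg_mul]
  set Pp : Matrix n n ℂ := (2:ℂ)⁻¹ • (-(M*M) - Complex.I • M) with hPpdef
  set Pm : Matrix n n ℂ := (2:ℂ)⁻¹ • (-(M*M) + Complex.I • M) with hPmdef
  have hPp2 : Pp * Pp = Pp := by
    simp only [hPpdef, smul_mul_assoc, mul_smul_comm, sub_mul, mul_sub, add_mul, mul_add,
      neg_mul, mul_neg, smul_neg, smul_sub, smul_add, smul_smul, neg_neg, Complex.I_mul_I,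
      h3', h4, hM]
    match_scalars <;> (ring_nf; try simp only [Complex.I_sq]; try ring_nf)
  have hPm2 : Pm * Pm = Pm := by
    simp only [hPmdef, smul_mul_assoc, mul_smul_comm, sub_mul, mul_sub, add_mul, mul_add,
      neg_mul, mul_neg, smul_neg, smul_sub, smul_add, smul_smul, neg_neg, Complex.I_mul_I,
      h3', h4, hM]
    match_scalars <;> (ring_nf; try simp only [Complex.I_sq]; try ring_nf)
  have hPpPm : Pp * Pm = 0 := by
    simp only [hPpdef, hPmdef, smul_mul_assoc, mul_smul_comm, sub_mul, mul_sub, add_mul, mul_add,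
      neg_mul, mul_neg, smul_neg, smul_sub, smul_add, smul_smul, neg_neg, Complex.I_mul_I,
      h3', h4, hM]
    match_scalars <;> (ring_nf; try simp only [Complex.I_sq]; try ring_nf)
  have hPmPp : Pm * Pp = 0 := by
    simp only [hPpdef, hPmdef, smul_mul_assoc, mul_smul_comm, sub_mul, mul_sub, add_mul, mul_add,
      neg_mul, mul_neg, smul_neg, smul_sub, smul_add, smul_smul, neg_neg, Complex.I_mul_I,
      h3', h4, hM]
    match_scalars <;> (ring_nf; try simp only [Complex.I_sq]; try ring_nf)
  have hdec : z • M = (z * Complex.I) • Pp + (-(z * Complex.I)) • Pm := by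
    simp only [hPpdef, hPmdef, smul_sub, smul_add, smul_neg, smul_smul, neg_smul]
    match_scalars <;> (ring_nf; try simp only [Complex.I_sq]; try ring_nf)
  have hcomm : Commute ((z * Complex.I) • Pp) ((-(z * Complex.I)) • Pm) := by
    unfold Commute SemiconjBy
    simp only [smul_mul_assoc, mul_smul_comm, hPpPm, hPmPp, smul_zero]
  rw [hdec, Matrix.exp_add_of_commute _ _ hcomm, exp_idem _ _ hPp2, exp_idem _ _ hPm2]
  have he2 : Complex.exp (-(z * Complex.I)) = Complex.cos z - Complex.sin z * Complex.I := by
    have h : -(z * Complex.I) = (-z) * Complex.I := by ring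
    rw [h, Complex.exp_mul_I, Complex.cos_neg, Complex.sin_neg, neg_mul]
    ring
  rw [Complex.exp_mul_I, he2]
  simp only [add_mul, mul_add, one_mul, mul_one, smul_mul_assoc, mul_smul_comm, hPpPm,
    smul_zero, add_zero]
  simp only [hPpdef, hPmdef]
  match_scalars <;> (ring_nf; try simp only [Complex.I_sq]; try ring_nf)

/-- `|0⟩⟨0|` projector. -/
private def Pn0 : Matrix (Fin 2) (Fin 2) ℂ := !![1, 0; 0, 0]
/-- `|1⟩⟨1|` projector. -/
private def Pn1 : Matrix (Fin 2) (Fin 2) ℂ := !![0, 0; 0, 1]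

private lemma Qdag_eq : Qdag = !![0, 0; 1, 0] := by
  ext i j
  fin_cases i <;> fin_cases j <;> simp [Qdag, X, Y] <;> norm_num

private lemma Qann_eq : Qann = !![0, 1; 0, 0] := by
  ext i j
  fin_cases i <;> fin_cases j <;> simp [Qann, X, Y] <;> norm_num

private lemma t1 : Qdag * Qann = Pn1 := by
  ext i j
  fin_cases i <;> fin_cases j <;>
    norm_num [Qdag_eq, Qann_eq, Pn1, Matrix.mul_apply, Fin.sum_univ_two]

private lemma t2 : Qann * Qdag = Pn0 := by
  ext i j
  fin_cases i <;> fin_cases j <;>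
    norm_num [Qdag_eq, Qann_eq, Pn0, Matrix.mul_apply, Fin.sum_univ_two]

private lemma t3 : Qdag * Qdag = 0 := by
  ext i j
  fin_cases i <;> fin_cases j <;>
    norm_num [Qdag_eq, Matrix.mul_apply, Fin.sum_univ_two]

private lemma t4 : Qann * Qann = 0 := by
  ext i j
  fin_cases i <;> fin_cases j <;>
    norm_num [Qann_eq, Matrix.mul_apply, Fin.sum_univ_two]

private lemma t5 : Z * Z = 1 := by
  ext i j
  fin_cases i <;> fin_cases j <;>
    norm_num [Z, Matrix.mul_apply, Fin.sum_univ_two, Matrix.one_apply]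

private lemma t6 : Z * Qdag = -Qdag := by
  ext i j
  fin_cases i <;> fin_cases j <;>
    norm_num [Z, Qdag_eq, Matrix.mul_apply, Fin.sum_univ_two]

private lemma t7 : Qdag * Z = Qdag := by
  ext i j
  fin_cases i <;> fin_cases j <;>
    norm_num [Z, Qdag_eq, Matrix.mul_apply, Fin.sum_univ_two]

private lemma t8 : Z * Qann = Qann := by
  ext i j
  fin_cases i <;> fin_cases j <;>
    norm_num [Z, Qann_eq, Matrix.mul_apply, Fin.sum_univ_two]

private lemma t9 : Qann * Z = -Qann := by
  ext i j
  fin_cases i <;> fin_cases j <;>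
    norm_num [Z, Qann_eq, Matrix.mul_apply, Fin.sum_univ_two]

private lemma t10 : Pn0 * Qdag = 0 := by
  ext i j
  fin_cases i <;> fin_cases j <;>
    norm_num [Pn0, Qdag_eq, Matrix.mul_apply, Fin.sum_univ_two]

private lemma t11 : Qdag * Pn0 = Qdag := by
  ext i j
  fin_cases i <;> fin_cases j <;>
    norm_num [Pn0, Qdag_eq, Matrix.mul_apply, Fin.sum_univ_two]

private lemma t12 : Pn0 * Qann = Qann := by
  ext i j
  fin_cases i <;> fin_cases j <;>
    norm_num [Pn0, Qann_eq, Matrix.mul_apply, Fin.sum_univ_two]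

private lemma t13 : Qann * Pn0 = 0 := by
  ext i j
  fin_cases i <;> fin_cases j <;>
    norm_num [Pn0, Qann_eq, Matrix.mul_apply, Fin.sum_univ_two]

private lemma t14 : Pn1 * Qdag = Qdag := by
  ext i j
  fin_cases i <;> fin_cases j <;>
    norm_num [Pn1, Qdag_eq, Matrix.mul_apply, Fin.sum_univ_two]

private lemma t15 : Qdag * Pn1 = 0 := by
  ext i j
  fin_cases i <;> fin_cases j <;>
    norm_num [Pn1, Qdag_eq, Matrix.mul_apply, Fin.sum_univ_two]

private lemma t16 : Pn1 * Qann = 0 := by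
  ext i j
  fin_cases i <;> fin_cases j <;>
    norm_num [Pn1, Qann_eq, Matrix.mul_apply, Fin.sum_univ_two]

private lemma t17 : Qann * Pn1 = Qann := by
  ext i j
  fin_cases i <;> fin_cases j <;>
    norm_num [Pn1, Qann_eq, Matrix.mul_apply, Fin.sum_univ_two]

private lemma hZsplit : Z = Pn0 - Pn1 := by
  ext i j
  fin_cases i <;> fin_cases j <;> norm_num [Z, Pn0, Pn1]

private lemma hOnesplit : (1 : Matrix (Fin 2) (Fin 2) ℂ) = Pn0 + Pn1 := by
  ext i j
  fin_cases i <;> fin_cases j <;> norm_num [Pn0, Pn1, Matrix.one_apply]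

private lemma kron3_mul (a b c d e f : Matrix (Fin 2) (Fin 2) ℂ) :
    (a ⊗ₖ (b ⊗ₖ c)) * (d ⊗ₖ (e ⊗ₖ f)) = (a * d) ⊗ₖ ((b * e) ⊗ₖ (c * f)) := by
  rw [Matrix.mul_kronecker_mul, Matrix.mul_kronecker_mul]

private lemma kron_sub_left {l m p q : Type*} (a b : Matrix l m ℂ) (c : Matrix p q ℂ) :
    (a - b) ⊗ₖ c = a ⊗ₖ c - b ⊗ₖ c := by
  ext ⟨i, k⟩ ⟨j, l⟩
  simp [Matrix.kroneckerMap_apply, sub_mul]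

private lemma kron_sub_right {l m p q : Type*} (a : Matrix l m ℂ) (b c : Matrix p q ℂ) :
    a ⊗ₖ (b - c) = a ⊗ₖ b - a ⊗ₖ c := by
  ext ⟨i, k⟩ ⟨j, l⟩
  simp [Matrix.kroneckerMap_apply, mul_sub]

private lemma kron_add_left {l m p q : Type*} (a b : Matrix l m ℂ) (c : Matrix p q ℂ) :
    (a + b) ⊗ₖ c = a ⊗ₖ c + b ⊗ₖ c := Matrix.add_kronecker a b c

private lemma kron_add_right {l m p q : Type*} (a : Matrix l m ℂ) (b c : Matrix p q ℂ) :
    a ⊗ₖ (b + c) = a ⊗ₖ b + a ⊗ₖ c := Matrix.kronecker_add a b c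

private lemma kron_neg_left {l m p q : Type*} (a : Matrix l m ℂ) (c : Matrix p q ℂ) :
    (-a) ⊗ₖ c = -(a ⊗ₖ c) := by
  ext ⟨i, k⟩ ⟨j, l⟩
  simp [Matrix.kroneckerMap_apply]

private lemma kron_neg_right {l m p q : Type*} (a : Matrix l m ℂ) (c : Matrix p q ℂ) :
    a ⊗ₖ (-c) = -(a ⊗ₖ c) := by
  ext ⟨i, k⟩ ⟨j, l⟩
  simp [Matrix.kroneckerMap_apply]

private lemma t18 : Pn0 * Pn0 = Pn0 := by
  ext i j
  fin_cases i <;> fin_cases j <;> norm_num [Pn0, Matrix.mul_apply, Fin.sum_univ_two]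

private lemma t19 : Pn1 * Pn1 = Pn1 := by
  ext i j
  fin_cases i <;> fin_cases j <;> norm_num [Pn1, Matrix.mul_apply, Fin.sum_univ_two]

private lemma t20 : Pn0 * Pn1 = 0 := by
  ext i j
  fin_cases i <;> fin_cases j <;> norm_num [Pn0, Pn1, Matrix.mul_apply, Fin.sum_univ_two]

private lemma t21 : Pn1 * Pn0 = 0 := by
  ext i j
  fin_cases i <;> fin_cases j <;> norm_num [Pn0, Pn1, Matrix.mul_apply, Fin.sum_univ_two]

private lemma cube_AB : Sm A3 B3 * Sm A3 B3 * Sm A3 B3 = -(Sm A3 B3) := by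
  simp only [Sm, A3, B3, ← Matrix.one_kronecker_one, sub_mul, mul_sub, kron3_mul,
    t1, t2, t3, t4, t10, t11, t12, t13, t14, t15, t16, t17,
    Matrix.one_mul, Matrix.mul_one, Matrix.zero_kronecker, Matrix.kronecker_zero,
    Matrix.zero_mul, Matrix.mul_zero, sub_zero, zero_sub, neg_neg, neg_sub,
    neg_mul, mul_neg]
  module

private lemma cube_BC : Sm B3 C3 * Sm B3 C3 * Sm B3 C3 = -(Sm B3 C3) := by
  simp only [Sm, B3, C3, ← Matrix.one_kronecker_one, sub_mul, mul_sub, kron3_mul,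
    t1, t2, t3, t4, t10, t11, t12, t13, t14, t15, t16, t17,
    Matrix.one_mul, Matrix.mul_one, Matrix.zero_kronecker, Matrix.kronecker_zero,
    Matrix.zero_mul, Matrix.mul_zero, sub_zero, zero_sub, neg_neg, neg_sub,
    neg_mul, mul_neg]
  module

/-- **Product of two exponentials of two-qubit excitation generators on three qubits.**
`exp(β S⁻_{AB}) exp(β S⁻_{BC}) = cos⁴(β/2) 𝟙 + (1/4)sin²β Z_B Z_C + (1/4)sin²β Z_A Z_B
+ sin⁴(β/2) Z_A Z_C + sinβ cos²(β/2) S⁻_{BC} + sinβ cos²(β/2) S⁻_{AB}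
− sin²(β/2) sinβ Z_A S⁺_{BC} − sin²(β/2) sinβ S⁺_{AB} Z_C + sin²β S⁻_{AB} S⁻_{BC}`. -/
theorem exp_two_qubit_excitation_product (β : ℝ) :
    NormedSpace.exp ((β : ℂ) • Sm A3 B3) * NormedSpace.exp ((β : ℂ) • Sm B3 C3) =
      (Real.cos (β/2) : ℂ)^4 • (1 : Matrix (Fin 2 × Fin 2 × Fin 2) (Fin 2 × Fin 2 × Fin 2) ℂ)
        + ((1/4 : ℂ) * (Real.sin β : ℂ)^2) • (B3 Z * C3 Z)
        + ((1/4 : ℂ) * (Real.sin β : ℂ)^2) • (A3 Z * B3 Z)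
        + (Real.sin (β/2) : ℂ)^4 • (A3 Z * C3 Z)
        + ((Real.sin β : ℂ) * (Real.cos (β/2) : ℂ)^2) • Sm B3 C3
        + ((Real.sin β : ℂ) * (Real.cos (β/2) : ℂ)^2) • Sm A3 B3
        - ((Real.sin (β/2) : ℂ)^2 * (Real.sin β : ℂ)) • (A3 Z * Sp B3 C3)
        - ((Real.sin (β/2) : ℂ)^2 * (Real.sin β : ℂ)) • (Sp A3 B3 * C3 Z)
        + (Real.sin β : ℂ)^2 • (Sm A3 B3 * Sm B3 C3) := by
  rw [exp_cube _ _ cube_AB, exp_cube _ _ cube_BC, ← Complex.ofReal_sin, ← Complex.ofReal_cos]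
  -- trigonometric preliminaries
  have hchR : Real.cos (β/2) ^ 2 = (1 + Real.cos β) / 2 := by
    have h := Real.cos_two_mul (β/2)
    rw [show 2 * (β/2) = β by ring] at h
    linarith
  have hshR : Real.sin (β/2) ^ 2 = (1 - Real.cos β) / 2 := by
    have h := Real.sin_sq_add_cos_sq (β/2)
    linarith
  have hch : ((Real.cos (β/2) : ℝ) : ℂ) ^ 2 = (1 + ((Real.cos β : ℝ) : ℂ)) / 2 := by
    rw [← Complex.ofReal_pow, hchR]
    push_cast
    ring
  have hsh : ((Real.sin (β/2) : ℝ) : ℂ) ^ 2 = (1 - ((Real.cos β : ℝ) : ℂ)) / 2 := by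
    rw [← Complex.ofReal_pow, hshR]
    push_cast
    ring
  have hch4 : ((Real.cos (β/2) : ℝ) : ℂ) ^ 4 = ((1 + ((Real.cos β : ℝ) : ℂ)) / 2) ^ 2 := by
    rw [← hch]; ring
  have hsh4 : ((Real.sin (β/2) : ℝ) : ℂ) ^ 4 = ((1 - ((Real.cos β : ℝ) : ℂ)) / 2) ^ 2 := by
    rw [← hsh]; ring
  have hs2 : ((Real.sin β : ℝ) : ℂ) ^ 2 = 1 - ((Real.cos β : ℝ) : ℂ) ^ 2 := by
    have h := Real.sin_sq_add_cos_sq β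
    rw [← Complex.ofReal_pow, ← Complex.ofReal_pow]
    norm_cast
    linarith
  rw [hch4, hsh4, hch, hsh]
  -- reduce everything to Kronecker triples and compare coefficients
  simp only [Sm, Sp, A3, B3, C3, ← Matrix.one_kronecker_one, sub_mul, mul_sub, add_mul, mul_add,
    smul_mul_assoc, mul_smul_comm, kron3_mul,
    t1, t2, t3, t4, t5, t6, t7, t8, t9, t10, t11, t12, t13, t14, t15, t16, t17,
    Matrix.one_mul, Matrix.mul_one, Matrix.zero_kronecker, Matrix.kronecker_zero,
    Matrix.zero_mul, Matrix.mul_zero, sub_zero, zero_sub, neg_neg, neg_sub, smul_neg, smul_sub,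
    smul_add, kron_neg_left, kron_neg_right, one_mul, mul_one, neg_mul, mul_neg]
  simp only [hZsplit, hOnesplit, kron_sub_left, kron_sub_right, kron_add_left, kron_add_right,
    kron_neg_left, kron_neg_right, kron3_mul,
    t1, t2, t3, t4, t10, t11, t12, t13, t14, t15, t16, t17, t18, t19, t20, t21,
    Matrix.one_mul, Matrix.mul_one, Matrix.zero_kronecker, Matrix.kronecker_zero,
    Matrix.zero_mul, Matrix.mul_zero, sub_zero, zero_sub, neg_neg, neg_sub, smul_neg, smul_sub,
    smul_add, smul_zero, one_mul, mul_one, neg_mul, mul_neg]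
  have hpyth : Complex.sin (β:ℂ)^2 + Complex.cos (β:ℂ)^2 = 1 := Complex.sin_sq_add_cos_sq _
  match_scalars <;> try ring
  all_goals try linear_combination hpyth/2
  all_goals linear_combination -hpyth/2
end PaperQAOA
end
end
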